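/- The function C is differentiable at every s ∈ [0,10] (one-sidedly at the endpoints), and its derivative is C′(s) = −(1/5)·∫₀^{(5/4)·(2−κ)} t/√((t + 2κ)² + κ²) dt − (1/2)·∫_{−(ν+2)}^{0} t/√((t + ν)² + ν²) dt, where κ := (2/5)·(s − 5) and ν := (1/2)·(s − 2). Moreover, C′(0) < 0 and C′(10) > 0. -/

import Mathlib

/-- The cost `C(s)` (under the Euclidean 2-norm) of the optimal monotone matching
candidate `γ_s` for the curves `P = ⟨(4,−2),(1,2),(1,−4)⟩`, `Q = ⟨(0,0),(5,0)⟩`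
whose parameter-space path follows the first cell's valley up to `ℓ¹`-parameter `s`. -/
noncomputable def C (s : ℝ) : ℝ :=
  2 / Real.sqrt 5 * (∫ t in (0:ℝ)..s, |t - 5|)
  + 1 / Real.sqrt 2 * (∫ t in (s + 6)..(16:ℝ), |t - 8|)
  + (∫ t in s..(s / 2 + 5), Real.sqrt (t ^ 2 - (2 * s / 5 + 8) * t + (s ^ 2 / 5 + 20)))
  + (∫ t in (s / 2 + 5)..(s + 6),
      Real.sqrt (t ^ 2 - (s + 14) * t + (s ^ 2 / 2 + 6 * s + 50)))

/-- The claimed derivative of `C`, with `κ = (2/5)·(s − 5)` and `ν = (1/2)·(s − 2)`. -/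
noncomputable def C' (s : ℝ) : ℝ :=
  -(1 / 5) * (∫ t in (0:ℝ)..(5 / 4 * (2 - 2 / 5 * (s - 5))),
      t / Real.sqrt ((t + 2 * (2 / 5 * (s - 5))) ^ 2 + (2 / 5 * (s - 5)) ^ 2))
  - 1 / 2 * (∫ t in (-(1 / 2 * (s - 2) + 2))..(0:ℝ),
      t / Real.sqrt ((t + 1 / 2 * (s - 2)) ^ 2 + (1 / 2 * (s - 2)) ^ 2))

/-!
Each term of `C` is an integral over an interval whose endpoints move affinely with `s`, and the
two square-root integrands are distances from `(t, 0)` to a point moving affinely with `s`.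
Differentiating under the integral sign (dominated convergence, the `s`-derivative of such a
distance being bounded) and at the moving endpoints (uniform continuity of the integrand on
compacts) gives `C'(s)` as the integrals of the `s`-derivatives plus boundary terms. The boundary
terms cancel: at `t = s` and `t = s + 6` the integrands equal the weights `(2/√5)|s - 5|` and
`(1/√2)|s - 2|` of the first two terms, and at `t = s/2 + 5` the two integrands agree. Shifting
`t` by `s`, resp. `s + 6`, turns the remaining integrals into those defining `C'`. The signs of
`C'(0)` and `C'(10)` follow from crude bounds on the integrands.
-/

open MeasureTheory Set Filter Topology Asymptotics intervalIntegral

section Leibniz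

variable {f : ℝ → ℝ → ℝ}

theorem isLittleO_integral_sub_of_continuous (hf : Continuous (Function.uncurry f))
    (s₀ b₀ : ℝ) :
    (fun p : ℝ × ℝ => ∫ t in b₀..p.2, (f p.1 t - f s₀ t)) =o[𝓝 (s₀, b₀)]
      fun p => p.2 - b₀ := by
  refine isLittleO_iff.2 fun ε hε => ?_
  obtain ⟨v, hv, hvε⟩ := (isCompact_Icc (a := b₀ - 1) (b := b₀ + 1)).mem_uniformity_of_prod
    hf.continuousOn (mem_univ s₀) (Metric.dist_mem_uniformity hε)
  rw [nhdsWithin_univ] at hv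
  have hb₀ : b₀ ∈ Icc (b₀ - 1) (b₀ + 1) := ⟨by linarith, by linarith⟩
  filter_upwards [prod_mem_nhds hv (Icc_mem_nhds (by linarith : b₀ - 1 < b₀)
    (by linarith : b₀ < b₀ + 1))] with ⟨s, y⟩ ⟨hs, hy⟩
  refine (intervalIntegral.norm_integral_le_of_norm_le_const fun t ht => ?_).trans_eq
    (by rw [Real.norm_eq_abs])
  rw [← dist_eq_norm]
  exact (hvε s hs t (uIcc_subset_Icc hb₀ hy (uIoc_subset_uIcc ht))).le

theorem hasDerivAt_integral_moving_upper (hf : Continuous (Function.uncurry f))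
    {b : ℝ → ℝ} {b' s₀ : ℝ} (hb : HasDerivAt b b' s₀) :
    HasDerivAt (fun s => ∫ t in b s₀..b s, f s t) (b' * f s₀ (b s₀)) s₀ := by
  have hcont : ∀ s, Continuous (f s) := fun s => hf.uncurry_left s
  have hfrozen : HasDerivAt (fun s => ∫ t in b s₀..b s, f s₀ t) (f s₀ (b s₀) * b') s₀ :=
    ((hcont s₀).integral_hasStrictDerivAt _ _).hasDerivAt.comp s₀ hb
  have hrest : HasDerivAt (fun s => ∫ t in b s₀..b s, (f s t - f s₀ t)) 0 s₀ := by
    rw [hasDerivAt_iff_isLittleO]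
    simp only [integral_same, sub_zero, smul_zero]
    exact ((isLittleO_integral_sub_of_continuous hf s₀ (b s₀)).comp_tendsto
      (tendsto_id.prodMk_nhds hb.continuousAt.tendsto)).trans_isBigO hb.isBigO_sub
  have hsplit : (fun s => ∫ t in b s₀..b s, f s t)
      = fun s => (∫ t in b s₀..b s, f s₀ t) + ∫ t in b s₀..b s, (f s t - f s₀ t) := by
    funext s
    rw [integral_sub ((hcont s).intervalIntegrable _ _) ((hcont s₀).intervalIntegrable _ _)]
    ring
  rw [hsplit]
  exact (hfrozen.add hrest).congr_deriv (by ring)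

theorem hasDerivAt_integral_moving_bounds (hf : Continuous (Function.uncurry f))
    {a b : ℝ → ℝ} {a' b' I s₀ : ℝ}
    (hI : HasDerivAt (fun s => ∫ t in a s₀..b s₀, f s t) I s₀)
    (ha : HasDerivAt a a' s₀) (hb : HasDerivAt b b' s₀) :
    HasDerivAt (fun s => ∫ t in a s..b s, f s t)
      (I + b' * f s₀ (b s₀) - a' * f s₀ (a s₀)) s₀ := by
  have hsplit : (fun s => ∫ t in a s..b s, f s t) = fun s => (∫ t in a s₀..b s₀, f s t)
      + (∫ t in b s₀..b s, f s t) - ∫ t in a s₀..a s, f s t := by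
    funext s
    have hint : ∀ x y, IntervalIntegrable (f s) volume x y := fun _ _ =>
      (hf.uncurry_left s).intervalIntegrable _ _
    have h₁ := integral_add_adjacent_intervals (hint (a s) (a s₀)) (hint (a s₀) (b s₀))
    have h₂ := integral_add_adjacent_intervals (hint (a s) (b s₀)) (hint (b s₀) (b s))
    have h₃ := integral_symm (μ := volume) (f := f s) (a s) (a s₀)
    linarith
  rw [hsplit]
  exact (hI.add (hasDerivAt_integral_moving_upper hf hb)).sub
    (hasDerivAt_integral_moving_upper hf ha)

end Leibniz

section SegmentDistance

noncomputable def segDist (α β γ δ x t : ℝ) : ℝ :=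
  √((t - (α * x + β)) ^ 2 + (γ * x + δ) ^ 2)

noncomputable def segDistDeriv (α β γ δ x t : ℝ) : ℝ :=
  (γ * (γ * x + δ) - α * (t - (α * x + β))) / segDist α β γ δ x t

variable (α β γ δ : ℝ)

theorem continuous_segDist : Continuous (Function.uncurry (segDist α β γ δ)) := by
  unfold Function.uncurry segDist
  fun_prop

theorem segDist_pos {x t : ℝ} (hγ : γ ≠ 0) (ht : t ≠ α * (-δ / γ) + β) :
    0 < segDist α β γ δ x t := by
  refine Real.sqrt_pos.2 (lt_of_le_of_ne (by positivity) fun h => ht ?_)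
  have hv : γ * x + δ = 0 := by nlinarith [sq_nonneg (t - (α * x + β))]
  have hu : t - (α * x + β) = 0 := by nlinarith [sq_nonneg (γ * x + δ)]
  rw [show x = -δ / γ by field_simp; linarith] at hu
  linarith

theorem hasDerivAt_segDist {x t : ℝ} (h : 0 < segDist α β γ δ x t) :
    HasDerivAt (fun x => segDist α β γ δ x t) (segDistDeriv α β γ δ x t) x := by
  have hu : HasDerivAt (fun x => t - (α * x + β)) (-α) x := by
    simpa using (((hasDerivAt_id x).const_mul α).add_const β).const_sub t
  have hv : HasDerivAt (fun x => γ * x + δ) γ x := by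
    simpa using ((hasDerivAt_id x).const_mul γ).add_const δ
  refine (((hu.fun_pow 2).fun_add (hv.fun_pow 2)).sqrt (Real.sqrt_pos.1 h).ne').congr_deriv ?_
  unfold segDistDeriv segDist
  field_simp
  ring

theorem abs_segDistDeriv_le (x t : ℝ) : |segDistDeriv α β γ δ x t| ≤ |α| + |γ| := by
  have hr : 0 ≤ segDist α β γ δ x t := Real.sqrt_nonneg _
  rw [segDistDeriv, abs_div, abs_of_nonneg hr]
  refine div_le_of_le_mul₀ hr (by positivity) ?_
  set u := t - (α * x + β)
  set v := γ * x + δ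
  have hu : |u| ≤ segDist α β γ δ x t := Real.abs_le_sqrt (by nlinarith [sq_nonneg v])
  have hv : |v| ≤ segDist α β γ δ x t := Real.abs_le_sqrt (by nlinarith [sq_nonneg u])
  calc |γ * v - α * u| ≤ |γ| * |v| + |α| * |u| := by
        rw [← abs_mul, ← abs_mul]; exact abs_sub _ _
    _ ≤ (|α| + |γ|) * segDist α β γ δ x t := by
        nlinarith [mul_le_mul_of_nonneg_left hu (abs_nonneg α),
          mul_le_mul_of_nonneg_left hv (abs_nonneg γ)]

theorem hasDerivAt_integral_segDist (hγ : γ ≠ 0) (a b x₀ : ℝ) :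
    HasDerivAt (fun x => ∫ t in a..b, segDist α β γ δ x t)
      (∫ t in a..b, segDistDeriv α β γ δ x₀ t) x₀ := by
  have hcont : ∀ x, Continuous (segDist α β γ δ x) :=
    fun x => (continuous_segDist α β γ δ).uncurry_left x
  have hpos : ∀ᵐ t, ∀ x, 0 < segDist α β γ δ x t := by
    filter_upwards [compl_mem_ae_iff.2 (measure_singleton (α * (-δ / γ) + β))] with t ht x
    exact segDist_pos α β γ δ hγ ht
  refine (hasDerivAt_integral_of_dominated_loc_of_deriv_le (bound := fun _ => |α| + |γ|)
    univ_mem (Eventually.of_forall fun x => (hcont x).aestronglyMeasurable)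
    ((hcont x₀).intervalIntegrable _ _) ?_ ?_ intervalIntegrable_const ?_).2
  · exact Measurable.aestronglyMeasurable (by unfold segDistDeriv segDist; fun_prop)
  · exact Eventually.of_forall fun t _ x _ => abs_segDistDeriv_le α β γ δ x t
  · filter_upwards [hpos] with t ht _ x _ using hasDerivAt_segDist α β γ δ (ht x)

end SegmentDistance

theorem C_eq_segDist : C = fun s => 2 / √5 * (∫ t in (0:ℝ)..s, |t - 5|)
    + 1 / √2 * (∫ t in (s + 6)..(16:ℝ), |t - 8|)
    + (∫ t in s..(s / 2 + 5), segDist (1 / 5) 4 (2 / 5) (-2) s t)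
    + ∫ t in (s / 2 + 5)..(s + 6), segDist (1 / 2) 7 (1 / 2) (-1) s t := by
  funext s
  rw [C]
  congr 2
  · exact integral_congr fun t _ => by simp only [segDist]; ring_nf
  · funext t
    simp only [segDist]
    ring_nf

theorem segDist_self (s : ℝ) : segDist (1 / 5) 4 (2 / 5) (-2) s s = 2 / √5 * |s - 5| := by
  rw [segDist, ← Real.sqrt_sq (by positivity : 0 ≤ 2 / √5 * |s - 5|)]
  congr 1
  rw [mul_pow, div_pow, sq_abs, Real.sq_sqrt (by norm_num)]
  ring

theorem segDist_add_six (s : ℝ) :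
    segDist (1 / 2) 7 (1 / 2) (-1) s (s + 6) = 1 / √2 * |s - 2| := by
  rw [segDist, ← Real.sqrt_sq (by positivity : 0 ≤ 1 / √2 * |s - 2|)]
  congr 1
  rw [mul_pow, div_pow, sq_abs, Real.sq_sqrt (by norm_num)]
  ring

theorem segDist_half_add_five (s : ℝ) :
    segDist (1 / 5) 4 (2 / 5) (-2) s (s / 2 + 5)
      = segDist (1 / 2) 7 (1 / 2) (-1) s (s / 2 + 5) := by
  rw [segDist, segDist]
  ring_nf

theorem integral_segDistDeriv_first (s : ℝ) :
    ∫ t in s..(s / 2 + 5), segDistDeriv (1 / 5) 4 (2 / 5) (-2) s t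
      = -(1 / 5) * ∫ t in (0:ℝ)..(5 / 4 * (2 - 2 / 5 * (s - 5))),
          t / √((t + 2 * (2 / 5 * (s - 5))) ^ 2 + (2 / 5 * (s - 5)) ^ 2) := by
  rw [← intervalIntegral.integral_const_mul, show (0:ℝ) = s - s by ring,
    show 5 / 4 * (2 - 2 / 5 * (s - 5)) = s / 2 + 5 - s by ring, ← integral_comp_sub_right]
  refine integral_congr fun t _ => ?_
  simp only [segDistDeriv, segDist]
  ring_nf

theorem integral_segDistDeriv_second (s : ℝ) :
    ∫ t in (s / 2 + 5)..(s + 6), segDistDeriv (1 / 2) 7 (1 / 2) (-1) s t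
      = -(1 / 2) * ∫ t in (-(1 / 2 * (s - 2) + 2))..(0:ℝ),
          t / √((t + 1 / 2 * (s - 2)) ^ 2 + (1 / 2 * (s - 2)) ^ 2) := by
  rw [← intervalIntegral.integral_const_mul, show (0:ℝ) = s + 6 - (s + 6) by ring,
    show -(1 / 2 * (s - 2) + 2) = s / 2 + 5 - (s + 6) by ring, ← integral_comp_sub_right]
  refine integral_congr fun t _ => ?_
  simp only [segDistDeriv, segDist]
  ring_nf

theorem hasDerivAt_C (s : ℝ) : HasDerivAt C (C' s) s := by
  have habs : ∀ c : ℝ, Continuous fun t : ℝ => |t - c| := fun c => by fun_prop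
  have h₁ : HasDerivAt (fun s => ∫ t in (0:ℝ)..s, |t - 5|) |s - 5| s :=
    ((habs 5).integral_hasStrictDerivAt 0 s).hasDerivAt
  have h₂ : HasDerivAt (fun s => ∫ t in (s + 6)..(16:ℝ), |t - 8|) (-|s - 2|) s := by
    refine (integral_hasDerivAt_left ((habs 8).intervalIntegrable (s + 6) 16)
      ((habs 8).stronglyMeasurableAtFilter _ _) (habs 8).continuousAt).comp s
      ((hasDerivAt_id s).add_const 6) |>.congr_deriv ?_
    rw [mul_one, show s + 6 - 8 = s - 2 by ring]
  have h₃ := hasDerivAt_integral_moving_bounds (a := fun s => s) (b := fun s => s / 2 + 5)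
    (continuous_segDist _ _ _ _) (hasDerivAt_integral_segDist (1 / 5) 4 (2 / 5) (-2)
      (by norm_num) _ _ s) (hasDerivAt_id s) (((hasDerivAt_id s).div_const 2).add_const 5)
  have h₄ := hasDerivAt_integral_moving_bounds (a := fun s => s / 2 + 5) (b := fun s => s + 6)
    (continuous_segDist _ _ _ _) (hasDerivAt_integral_segDist (1 / 2) 7 (1 / 2) (-1)
      (by norm_num) _ _ s) (((hasDerivAt_id s).div_const 2).add_const 5)
      ((hasDerivAt_id s).add_const 6)
  rw [C_eq_segDist]
  have h := ((h₁.const_mul (2 / √5)).fun_add (h₂.const_mul (1 / √2))).fun_add h₃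
  refine (h.fun_add h₄).congr_deriv ?_
  rw [integral_segDistDeriv_first, integral_segDistDeriv_second, segDist_self, segDist_add_six,
    segDist_half_add_five, C']
  ring

theorem continuous_div_sqrt_sq_add_sq {d : ℝ} (c : ℝ) (hd : d ≠ 0) :
    Continuous fun t : ℝ => t / √((t + c) ^ 2 + d ^ 2) :=
  continuous_id.div (by fun_prop) fun t => (Real.sqrt_pos.2 (by positivity)).ne'

theorem C'_zero_neg : C' 0 < 0 := by
  have hC' : C' 0 = -(1 / 5) * (∫ t in (0:ℝ)..5, t / √((t + -4) ^ 2 + (-2) ^ 2))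
      - 1 / 2 * ∫ t in (-1:ℝ)..0, t / √((t + -1) ^ 2 + (-1) ^ 2) := by
    rw [C']; norm_num
  have hfirst : 5 / 2 ≤ ∫ t in (0:ℝ)..5, t / √((t + -4) ^ 2 + (-2) ^ 2) := by
    calc (5 / 2 : ℝ) = ∫ t in (0:ℝ)..5, t / 5 := by norm_num [intervalIntegral.integral_div]
      _ ≤ _ := by
        refine integral_mono_on (by norm_num) ((continuous_id.div_const 5).intervalIntegrable _ _)
          ((continuous_div_sqrt_sq_add_sq _ (by norm_num)).intervalIntegrable _ _) fun t ht => ?_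
        refine div_le_div_of_nonneg_left ht.1 (Real.sqrt_pos.2 (by positivity)) ?_
        exact (Real.sqrt_le_left (by norm_num)).2 (by nlinarith [ht.1, ht.2])
  have hsecond : -(1 / 2) ≤ ∫ t in (-1:ℝ)..0, t / √((t + -1) ^ 2 + (-1) ^ 2) := by
    calc -(1 / 2 : ℝ) = ∫ t in (-1:ℝ)..0, t := by norm_num
      _ ≤ _ := by
        refine integral_mono_on (by norm_num) (continuous_id.intervalIntegrable _ _)
          ((continuous_div_sqrt_sq_add_sq _ (by norm_num)).intervalIntegrable _ _) fun t ht => ?_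
        have hr : 1 ≤ √((t + -1) ^ 2 + (-1) ^ 2) := Real.one_le_sqrt.2 (by nlinarith)
        rw [le_div_iff₀ (by linarith)]
        nlinarith [ht.2]
  linarith

theorem C'_ten_pos : 0 < C' 10 := by
  have hC' : C' 10 = -(1 / 2) * ∫ t in (-6:ℝ)..0, t / √((t + 4) ^ 2 + 4 ^ 2) := by
    rw [C']; norm_num
  have hneg : 0 < ∫ t in (-6:ℝ)..0, -(t / √((t + 4) ^ 2 + 4 ^ 2)) :=
    intervalIntegral_pos_of_pos_on
      ((continuous_div_sqrt_sq_add_sq _ (by norm_num)).neg.intervalIntegrable _ _)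
      (fun t ht => neg_pos.2 (div_neg_of_neg_of_pos ht.2 (Real.sqrt_pos.2 (by positivity))))
      (by norm_num)
  rw [intervalIntegral.integral_neg] at hneg
  linarith

theorem C_hasDerivWithinAt :
    (∀ s ∈ Set.Icc (0 : ℝ) 10, HasDerivWithinAt C (C' s) (Set.Icc (0 : ℝ) 10) s) ∧
    C' 0 < 0 ∧ C' 10 > 0 :=
  ⟨fun s _ => (hasDerivAt_C s).hasDerivWithinAt, C'_zero_neg, C'_ten_pos⟩
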